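/- arXiv:1409.5201 — 4 statements merged into one kernel-verified Lean document; each statement's English description precedes it below -/
import Mathlib

section
/- Let M be a connected topological manifold without boundary (a metric space in which every point has a neighborhood homeomorphic to ℝⁿ for some fixed n ≥ 1), let f : M → M be a homeomorphism, and let x ∈ M be a positively recurrent point of f, i.e. for every neighborhood V of x there exists N ≥ 1 with f^N(x) ∈ V. Then for every ε > 0 there exists a homeomorphism g : M → M such that sup_{y ∈ M} dist(g(y), f(y)) < ε and x is a periodic point of g, i.e. g^N(x) = x for some N ≥ 1. -/
/-!
Take a Euclidean chart at `x` and a small neighbourhood `V` of `x` inside it; by recurrence the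
orbit of `x` returns to `V`, first at `f^[N] x`. In a connected open subset of a Banach space any
point can be moved to any other by a homeomorphism supported in that subset, a composition of small
shears `y ↦ y + t y • v`. Transporting to `M` such a homeomorphism `h` with `h (f^[N] x) = x` and
putting `g = h ∘ f`, the iterates `f^[k] x` with `0 < k < N` lie outside `V` and are untouched, so
`g^[N] x = x`; and `g` differs from `f` only inside `V`, by less than twice its radius.
-/

open scoped Topology
open Function Metric Set

lemma mapsTo_self_of_forall_notMem_eq {α : Type*} {e : α → α} (he : Injective e) {s : Set α}
    (hfix : ∀ y ∉ s, e y = y) : MapsTo e s s := by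
  intro y hy
  by_contra hey
  rw [he (hfix _ hey)] at hey
  exact hey hy

lemma dist_apply_lt_of_forall_notMem_ball_eq {α : Type*} [PseudoMetricSpace α] {e : α → α}
    (he : Injective e) {x : α} {r : ℝ} (hr : 0 < r) (hfix : ∀ y ∉ ball x r, e y = y) (y : α) :
    dist (e y) y < 2 * r := by
  by_cases hy : y ∈ ball x r
  · have hey : e y ∈ ball x r := mapsTo_self_of_forall_notMem_eq he hfix hy
    calc dist (e y) y ≤ dist (e y) x + dist y x := dist_triangle_right _ _ _
      _ < r + r := add_lt_add hey hy
      _ = 2 * r := by ring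
  · rw [hfix y hy, dist_self]
    positivity

section NormedSpace

variable {E : Type*} [NormedAddCommGroup E] [NormedSpace ℝ E]

/-- The shear `y ↦ y + t y • v` along a tent function `t` of radius `s` is a homeomorphism, since
`y ↦ t y • v` is `‖v‖ / s`-Lipschitz and `‖v‖ / s < 1`. -/
lemma exists_homeomorph_apply_eq_add [CompleteSpace E] (p v : E) {s : ℝ} (hv : ‖v‖ < s) :
    ∃ H : E ≃ₜ E, H p = p + v ∧ ∀ y ∉ ball p s, H y = y := by
  have hs : 0 < s := (norm_nonneg v).trans_lt hv
  set t : E → ℝ := fun y => max (1 - dist y p / s) 0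
  have ht : ∀ a b, |t a - t b| ≤ dist a b / s := fun a b =>
    calc |t a - t b| ≤ |(1 - dist a p / s) - (1 - dist b p / s)| := abs_max_sub_max_le_abs _ _ _
      _ = |dist a p - dist b p| / s := by
        rw [sub_sub_sub_cancel_left, ← sub_div, abs_div, abs_of_pos hs, abs_sub_comm]
      _ ≤ dist a b / s := by gcongr; exact abs_dist_sub_le a b p
  set c : NNReal := ⟨‖v‖ / s, by positivity⟩
  have hlip : LipschitzWith c fun y => t y • v := LipschitzWith.of_dist_le_mul fun a b =>
    calc dist (t a • v) (t b • v) = |t a - t b| * ‖v‖ := by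
          rw [dist_eq_norm, ← sub_smul, norm_smul, Real.norm_eq_abs]
      _ ≤ dist a b / s * ‖v‖ := by gcongr; exact ht a b
      _ = ‖v‖ / s * dist a b := by ring
  have happrox : ApproximatesLinearOn (fun y => y + t y • v)
      (ContinuousLinearEquiv.refl ℝ E : E →L[ℝ] E) univ c := by
    refine LipschitzOnWith.approximatesLinearOn ?_
    convert hlip.lipschitzOnWith (s := univ) using 1
    ext y
    simp
  have hc : Subsingleton E ∨ c < ‖((ContinuousLinearEquiv.refl ℝ E).symm : E →L[ℝ] E)‖₊⁻¹ := by
    rcases subsingleton_or_nontrivial E with hE | hE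
    · exact Or.inl hE
    · refine Or.inr ?_
      rw [ContinuousLinearEquiv.refl_symm, ContinuousLinearEquiv.coe_refl,
        ContinuousLinearMap.nnnorm_id, inv_one, ← NNReal.coe_lt_coe]
      exact (div_lt_one hs).2 hv
  refine ⟨happrox.toHomeomorph _ hc, ?_, fun y hy => ?_⟩
  · change p + t p • v = p + v
    simp [t]
  · change y + t y • v = y
    have : t y = 0 := max_eq_right <| by
      rw [mem_ball, not_lt] at hy
      linarith [(one_le_div hs).2 hy]
    simp [this]

/-- The relation "some homeomorphism supported in `s` maps `a` to `b`" is an equivalence relation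
whose classes are open by `exists_homeomorph_apply_eq_add`. -/
theorem IsOpen.exists_homeomorph_apply_eq [CompleteSpace E] {s : Set E} (hso : IsOpen s)
    (hsc : IsPreconnected s) {a b : E} (ha : a ∈ s) (hb : b ∈ s) :
    ∃ H : E ≃ₜ E, H a = b ∧ ∀ y ∉ s, H y = y := by
  refine hsc.induction₂ (fun a b => ∃ H : E ≃ₜ E, H a = b ∧ ∀ y ∉ s, H y = y) ?_ ?_ ?_ ha hb
  · intro a ha
    obtain ⟨r, hr, hball⟩ := isOpen_iff.mp hso a ha
    filter_upwards [nhdsWithin_le_nhds (ball_mem_nhds a hr)] with b hb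
    obtain ⟨H, hHa, hHfix⟩ :=
      exists_homeomorph_apply_eq_add a (b - a) (by rwa [← dist_eq_norm])
    exact ⟨H, by rw [hHa, add_sub_cancel], fun y hy => hHfix y fun h => hy (hball h)⟩
  · rintro a b c - - - ⟨H₁, h₁, f₁⟩ ⟨H₂, h₂, f₂⟩
    exact ⟨H₁.trans H₂, by simp [h₁, h₂], fun y hy => by simp [f₁ y hy, f₂ y hy]⟩
  · rintro a b - - ⟨H, hH, hfix⟩
    exact ⟨H.symm, H.symm_apply_eq.2 hH.symm, fun y hy => H.symm_apply_eq.2 (hfix y hy).symm⟩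

end NormedSpace

section ExtendById

variable {M E : Type*} [TopologicalSpace M] [TopologicalSpace E] {U : Set M}

open Classical in
noncomputable def extendById (φ : U ≃ₜ E) (F : E → E) (m : M) : M :=
  if hm : m ∈ U then φ.symm (F (φ ⟨m, hm⟩)) else m

variable (φ : U ≃ₜ E) (F G : E → E)

lemma extendById_coe (u : U) : extendById φ F u = φ.symm (F (φ u)) := by
  simp [extendById]

lemma extendById_of_notMem {m : M} (hm : m ∉ U) : extendById φ F m = m := by
  simp [extendById, hm]

lemma extendById_extendById (m : M) :
    extendById φ G (extendById φ F m) = extendById φ (G ∘ F) m := by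
  by_cases hm : m ∈ U
  · lift m to U using hm
    simp [extendById_coe]
  · simp [extendById_of_notMem, hm]

lemma extendById_id (m : M) : extendById φ id m = m := by
  by_cases hm : m ∈ U
  · lift m to U using hm
    simp [extendById_coe]
  · exact extendById_of_notMem φ id hm

lemma extendById_eq_self {s : Set E} (hF : ∀ y ∉ s, F y = y) {m : M}
    (hm : m ∉ Subtype.val '' (φ ⁻¹' s)) : extendById φ F m = m := by
  by_cases hmU : m ∈ U
  · lift m to U using hmU
    rw [extendById_coe, hF _ fun h => hm ⟨m, h, rfl⟩, Homeomorph.symm_apply_apply]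
  · exact extendById_of_notMem φ F hmU

/-- Continuity at the frontier of `U` holds because `F` moves only points of a compact set,
whose preimage stays away from the frontier. -/
lemma continuous_extendById [T2Space M] (hU : IsOpen U) (hF : Continuous F) {K : Set E}
    (hK : IsCompact K) (hFK : ∀ y ∉ K, F y = y) : Continuous (extendById φ F) := by
  set C := Subtype.val '' (φ ⁻¹' K)
  have hC : IsClosed C :=
    ((φ.isCompact_preimage.2 hK).image continuous_subtype_val).isClosed
  have hcontU : ContinuousOn (extendById φ F) U := by
    rw [continuousOn_iff_continuous_domRestrict]
    have : U.domRestrict (extendById φ F) = fun u => (φ.symm (F (φ u)) : M) :=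
      funext (extendById_coe φ F)
    rw [this]
    fun_prop
  refine continuous_iff_continuousAt.2 fun m => ?_
  by_cases hm : m ∈ C
  · obtain ⟨u, -, rfl⟩ := hm
    exact hcontU.continuousAt (hU.mem_nhds u.2)
  · refine continuousAt_id.congr ?_
    filter_upwards [hC.isOpen_compl.mem_nhds hm] with m' hm'
    exact (extendById_eq_self φ F hFK hm').symm

lemma exists_homeomorph_coe_eq_extendById [T2Space M] (hU : IsOpen U) (H : E ≃ₜ E) {K : Set E}
    (hK : IsCompact K) (hHK : ∀ y ∉ K, H y = y) :
    ∃ h : M ≃ₜ M, ⇑h = extendById φ H := by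
  have hHK' : ∀ y ∉ K, H.symm y = y := fun y hy => H.symm_apply_eq.2 (hHK y hy).symm
  refine ⟨{ toFun := extendById φ H, invFun := extendById φ H.symm
            left_inv := fun m => ?_, right_inv := fun m => ?_
            continuous_toFun := continuous_extendById φ H hU H.continuous hK hHK
            continuous_invFun := continuous_extendById φ H.symm hU H.symm.continuous hK hHK' }, rfl⟩
  · rw [extendById_extendById, H.symm_comp_self, extendById_id]
  · rw [extendById_extendById, H.self_comp_symm, extendById_id]

end ExtendById

theorem exists_nhds_forall_exists_homeomorph_apply_eq {M E : Type*} [TopologicalSpace M]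
    [T2Space M] [NormedAddCommGroup E] [NormedSpace ℝ E] [ProperSpace E] {U : Set M}
    (hU : IsOpen U) (φ : U ≃ₜ E) {x : M} (hx : x ∈ U) {W : Set M} (hW : W ∈ 𝓝 x) :
    ∃ V ∈ 𝓝 x, V ⊆ W ∧ ∀ z ∈ V, ∃ h : M ≃ₜ M, h z = x ∧ ∀ m ∉ V, h m = m := by
  set c := φ ⟨x, hx⟩
  have hWc : (fun y => (φ.symm y : M)) ⁻¹' W ∈ 𝓝 c :=
    (continuous_subtype_val.comp φ.symm.continuous).continuousAt.preimage_mem_nhds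
      (by simpa [c] using hW)
  obtain ⟨R, hR, hRW⟩ := Metric.mem_nhds_iff.1 hWc
  refine ⟨Subtype.val '' (φ ⁻¹' ball c R), ?_, ?_, ?_⟩
  · exact (hU.isOpenMap_subtype_val _ (isOpen_ball.preimage φ.continuous)).mem_nhds
      ⟨⟨x, hx⟩, mem_ball_self hR, rfl⟩
  · rintro _ ⟨u, hu, rfl⟩
    simpa using hRW hu
  · rintro _ ⟨u, hu, rfl⟩
    obtain ⟨H, hHu, hHfix⟩ :=
      isOpen_ball.exists_homeomorph_apply_eq (convex_ball c R).isPreconnected hu (mem_ball_self hR)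
    obtain ⟨h, hh⟩ := exists_homeomorph_coe_eq_extendById φ hU H (isCompact_closedBall c R)
      fun y hy => hHfix y fun h => hy (ball_subset_closedBall h)
    refine ⟨h, ?_, fun m hm => hh ▸ extendById_eq_self φ H hHfix hm⟩
    simp [hh, extendById_coe, hHu, c]

theorem iterate_comp_apply_eq_self_of_first_return {α : Type*} {f h : α → α} {S : Set α} {x : α}
    {N : ℕ} (hN : 1 ≤ N) (hfirst : ∀ k, 1 ≤ k → k < N → f^[k] x ∉ S)
    (hfix : ∀ y ∉ S, h y = y) (hret : h (f^[N] x) = x) : (h ∘ f)^[N] x = x := by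
  have horbit : ∀ k < N, (h ∘ f)^[k] x = f^[k] x := by
    intro k hk
    induction k with
    | zero => rfl
    | succ k ih =>
      rw [iterate_succ_apply', ih (by omega), comp_apply, ← iterate_succ_apply' f]
      exact hfix _ (hfirst _ (by omega) hk)
  obtain ⟨k, rfl⟩ : ∃ k, N = k + 1 := ⟨N - 1, by omega⟩
  rw [iterate_succ_apply', horbit k (by omega), comp_apply, ← iterate_succ_apply' f, hret]

theorem stmt0_general {M : Type*} [MetricSpace M]
    (n : ℕ)
    (hman : ∀ p : M, ∃ U : Set M, IsOpen U ∧ p ∈ U ∧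
      Nonempty (U ≃ₜ EuclideanSpace ℝ (Fin n)))
    (f : M ≃ₜ M) (x : M)
    (hrec : ∀ V ∈ 𝓝 x, ∃ N : ℕ, 1 ≤ N ∧ (⇑f)^[N] x ∈ V)
    (ε : ℝ) (hε : 0 < ε) :
    ∃ g : M ≃ₜ M,
      (⨆ y : M, edist (g y) (f y)) < ENNReal.ofReal ε ∧
      ∃ N : ℕ, 1 ≤ N ∧ (⇑g)^[N] x = x := by
  classical
  obtain ⟨U, hU, hxU, ⟨φ⟩⟩ := hman x
  obtain ⟨V, hV, hVε, hhom⟩ := exists_nhds_forall_exists_homeomorph_apply_eq hU φ hxU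
    (ball_mem_nhds x (by positivity : 0 < ε / 3))
  have hret := hrec V hV
  obtain ⟨hN, hNV⟩ := Nat.find_spec hret
  obtain ⟨h, hhx, hfix⟩ := hhom _ hNV
  have hdist : ∀ y, dist (h y) y < 2 * (ε / 3) := dist_apply_lt_of_forall_notMem_ball_eq
    h.injective (by positivity) fun y hy => hfix y fun hyV => hy (hVε hyV)
  refine ⟨f.trans h, ?_, Nat.find hret, hN, ?_⟩
  · calc (⨆ y, edist ((f.trans h) y) (f y)) ≤ ENNReal.ofReal (2 * (ε / 3)) :=
          iSup_le fun y => by rw [edist_dist]; exact ENNReal.ofReal_le_ofReal (hdist (f y)).le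
      _ < ENNReal.ofReal ε := (ENNReal.ofReal_lt_ofReal_iff hε).2 (by linarith)
  · exact iterate_comp_apply_eq_self_of_first_return (f := f) (h := h) hN
      (fun k hk hkN hkV => Nat.find_min hret hkN ⟨hk, hkV⟩) hfix hhx

/-- **C⁰-closing lemma.** Let `M` be a connected topological manifold without boundary
(a metric space in which every point has a neighborhood homeomorphic to `ℝⁿ` for some
fixed `n ≥ 1`), `f : M → M` a homeomorphism and `x` a positively recurrent point of `f`.
Then for every `ε > 0` there is a homeomorphism `g` with `sup_y dist (g y) (f y) < ε`
for which `x` is periodic. -/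
theorem stmt0 {M : Type*} [MetricSpace M] [ConnectedSpace M]
    (n : ℕ) (hn : 1 ≤ n)
    (hman : ∀ p : M, ∃ U : Set M, IsOpen U ∧ p ∈ U ∧
      Nonempty (U ≃ₜ EuclideanSpace ℝ (Fin n)))
    (f : M ≃ₜ M) (x : M)
    (hrec : ∀ V ∈ 𝓝 x, ∃ N : ℕ, 1 ≤ N ∧ (⇑f)^[N] x ∈ V)
    (ε : ℝ) (hε : 0 < ε) :
    ∃ g : M ≃ₜ M,
      (⨆ y : M, edist (g y) (f y)) < ENNReal.ofReal ε ∧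
      ∃ N : ℕ, 1 ≤ N ∧ (⇑g)^[N] x = x :=
  stmt0_general n hman f x hrec ε hε
end

section
/- Define on N the equivalence relation γ₁ ∼ γ₂ if and only if there exist ε ∈ {−1, +1} and c ∈ ℝ such that γ₁(t) = γ₂(εt + c) for all t ∈ ℝ/ℤ (i.e. γ₁ = γ₂ ∘ u for an isometry u of ℝ). Let L = N/∼ and for equivalence classes ℓ₁, ℓ₂ set δ(ℓ₁, ℓ₂) = inf { d(γ₁, γ₂) : γ₁ ∈ ℓ₁, γ₂ ∈ ℓ₂ }. Then δ is a distance on L (in particular δ(ℓ₁, ℓ₂) = 0 implies ℓ₁ = ℓ₂), and the metric space (L, δ) is complete. -/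
open scoped Topology
open Filter

/-- `Γ`: the space of `C¹` loops `γ : ℝ/ℤ → ℝ²`, seen as 1-periodic `C¹` maps `ℝ → ℝ²`. -/
def InGamma (γ : ℝ → EuclideanSpace ℝ (Fin 2)) : Prop :=
  ContDiff ℝ 1 γ ∧ Function.Periodic γ 1

/-- The distance on `Γ` induced by the C¹ norm `‖γ‖ = ‖γ‖_∞ + ‖γ'‖_∞`. -/
noncomputable def dC1 (γ₁ γ₂ : ℝ → EuclideanSpace ℝ (Fin 2)) : ℝ :=
  (⨆ t : ℝ, dist (γ₁ t) (γ₂ t)) + (⨆ t : ℝ, dist (deriv γ₁ t) (deriv γ₂ t))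

/-- `N`: the set of unit-speed parametrizations in `Γ`. -/
def InN (γ : ℝ → EuclideanSpace ℝ (Fin 2)) : Prop :=
  InGamma γ ∧ ∀ t : ℝ, ‖deriv γ t‖ = 1

/-- `γ₁ ∼ γ₂` iff `γ₁ = γ₂ ∘ u` for an isometry `u : t ↦ εt + c` of `ℝ`, `ε = ±1`. -/
def LoopRel (γ₁ γ₂ : ℝ → EuclideanSpace ℝ (Fin 2)) : Prop :=
  ∃ ε c : ℝ, (ε = 1 ∨ ε = -1) ∧ ∀ t : ℝ, γ₁ t = γ₂ (ε * t + c)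

/-- `δ([γ₁], [γ₂]) = inf { d(g₁, g₂) : g₁ ∈ [γ₁], g₂ ∈ [γ₂] }`. -/
noncomputable def deltaDist (γ₁ γ₂ : ℝ → EuclideanSpace ℝ (Fin 2)) : ℝ :=
  sInf {r : ℝ | ∃ g₁ g₂ : ℝ → EuclideanSpace ℝ (Fin 2),
    LoopRel g₁ γ₁ ∧ LoopRel g₂ γ₂ ∧ r = dC1 g₁ g₂}

/-!
Reparametrizing two loops by the same isometry of `ℝ` preserves their `C¹` distance, so
`δ(ℓ₁, ℓ₂)` is the infimum of `d(γ₁, g)` over `g ∈ ℓ₂` for any fixed `γ₁ ∈ ℓ₁`; the triangle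
inequality follows. If `δ(ℓ₁, ℓ₂) = 0`, the parameters `(ε, c)` of reparametrizations of `γ₂`
approaching `γ₁` may be taken in the compact set `{±1} × [0, 1]`, and a common accumulation point
reparametrizes `γ₂` into `γ₁`. To prove completeness, aligning representatives one after another
along a subsequence with `δ`-steps below `2⁻ᵏ` gives a Cauchy sequence in `(Γ, d)`, and `N` is
closed in `Γ`: the derivatives converge uniformly, so their limit is the derivative of the limit
and still has unit length.
-/

open Function Set

local notation "ℝ²" => EuclideanSpace ℝ (Fin 2)

section SupDist

variable {α E : Type*} [PseudoMetricSpace E]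

theorem bddAbove_range_dist {f g : α → E} (hf : Bornology.IsBounded (range f))
    (hg : Bornology.IsBounded (range g)) : BddAbove (range fun t => dist (f t) (g t)) := by
  obtain ⟨C, hC⟩ := Metric.isBounded_iff.mp (hf.union hg)
  exact ⟨C, by rintro _ ⟨t, rfl⟩; exact hC (Or.inl ⟨t, rfl⟩) (Or.inr ⟨t, rfl⟩)⟩

theorem ciSup_dist_le_add {f g h : α → E} (hfg : BddAbove (range fun t => dist (f t) (g t)))
    (hgh : BddAbove (range fun t => dist (g t) (h t))) :
    ⨆ t, dist (f t) (h t) ≤ (⨆ t, dist (f t) (g t)) + ⨆ t, dist (g t) (h t) :=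
  Real.iSup_le
    (fun t => (dist_triangle _ (g t) _).trans (add_le_add (le_ciSup hfg t) (le_ciSup hgh t)))
    (add_nonneg (Real.iSup_nonneg fun _ => dist_nonneg) (Real.iSup_nonneg fun _ => dist_nonneg))

end SupDist

theorem deriv_comp_mul_add {F : Type*} [NormedAddCommGroup F] [NormedSpace ℝ F] (g : ℝ → F)
    (a c t : ℝ) : deriv (fun s => g (a * s + c)) t = a • deriv g (a * t + c) :=
  (deriv_comp_mul_left a (fun s => g (s + c)) t).trans (by rw [deriv_comp_add_const])

namespace LoopRel

theorem refl (γ : ℝ → ℝ²) : LoopRel γ γ :=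
  ⟨1, 0, Or.inl rfl, fun t => by simp⟩

theorem symm {γ₁ γ₂ : ℝ → ℝ²} (h : LoopRel γ₁ γ₂) : LoopRel γ₂ γ₁ := by
  obtain ⟨ε, c, hε, h⟩ := h
  have hεε : ε * ε = 1 := by rcases hε with rfl | rfl <;> norm_num
  refine ⟨ε, -(ε * c), hε, fun t => ?_⟩
  rw [h, show ε * (ε * t + -(ε * c)) + c = t by linear_combination (t - c) * hεε]

theorem trans {γ₁ γ₂ γ₃ : ℝ → ℝ²} (h₁₂ : LoopRel γ₁ γ₂) (h₂₃ : LoopRel γ₂ γ₃) :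
    LoopRel γ₁ γ₃ := by
  obtain ⟨ε, c, hε, h⟩ := h₁₂
  obtain ⟨ε', c', hε', h'⟩ := h₂₃
  refine ⟨ε' * ε, ε' * c + c', ?_, fun t => by rw [h, h']; ring_nf⟩
  rcases hε with rfl | rfl <;> rcases hε' with rfl | rfl <;> norm_num

theorem comp_mul_add (γ : ℝ → ℝ²) {ε : ℝ} (hε : ε = 1 ∨ ε = -1) (c : ℝ) :
    LoopRel (fun t => γ (ε * t + c)) γ :=
  ⟨ε, c, hε, fun _ => rfl⟩

theorem exists_mem_Ico {g γ : ℝ → ℝ²} (h : LoopRel g γ) (hγ : Periodic γ 1) :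
    ∃ ε c : ℝ, (ε = 1 ∨ ε = -1) ∧ c ∈ Ico (0 : ℝ) 1 ∧ ∀ t, g t = γ (ε * t + c) := by
  obtain ⟨ε, c, hε, h⟩ := h
  refine ⟨ε, Int.fract c, hε, ⟨Int.fract_nonneg c, Int.fract_lt_one c⟩, fun t => ?_⟩
  rw [h, ← hγ.sub_int_mul_eq ⌊c⌋, Int.fract]
  ring_nf

end LoopRel

namespace InN

variable {γ : ℝ → ℝ²}

theorem differentiable (hγ : InN γ) : Differentiable ℝ γ :=
  hγ.1.1.differentiable one_ne_zero

theorem continuous_deriv (hγ : InN γ) : Continuous (deriv γ) :=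
  hγ.1.1.continuous_deriv le_rfl

theorem isBounded_range (hγ : InN γ) : Bornology.IsBounded (range γ) :=
  hγ.1.2.isBounded_of_continuous one_ne_zero hγ.1.1.continuous

theorem isBounded_range_deriv (hγ : InN γ) : Bornology.IsBounded (range (deriv γ)) :=
  (Metric.isBounded_sphere (x := 0) (r := 1)).subset <| by
    rintro _ ⟨t, rfl⟩; simpa using hγ.2 t

theorem comp_mul_add (hγ : InN γ) {ε : ℝ} (hε : ε = 1 ∨ ε = -1) (c : ℝ) :
    InN fun t => γ (ε * t + c) := by
  obtain ⟨⟨hC1, hper⟩, hunit⟩ := hγ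
  have hperε : Periodic γ ε := by rcases hε with rfl | rfl; exacts [hper, hper.neg]
  refine ⟨⟨hC1.comp (by fun_prop), fun t => ?_⟩, fun t => ?_⟩
  · simpa only [mul_add, mul_one, add_right_comm] using hperε (ε * t + c)
  · rw [deriv_comp_mul_add, norm_smul, hunit, mul_one, Real.norm_eq_abs,
      (abs_eq zero_le_one).mpr hε]

theorem of_loopRel {g : ℝ → ℝ²} (hγ : InN γ) (h : LoopRel g γ) : InN g := by
  obtain ⟨ε, c, hε, h⟩ := h
  exact (funext h : g = _) ▸ hγ.comp_mul_add hε c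

end InN

section dC1

variable {g₁ g₂ g₃ : ℝ → ℝ²}

theorem dC1_nonneg (g₁ g₂ : ℝ → ℝ²) : 0 ≤ dC1 g₁ g₂ :=
  add_nonneg (Real.iSup_nonneg fun _ => dist_nonneg) (Real.iSup_nonneg fun _ => dist_nonneg)

theorem dC1_comm (g₁ g₂ : ℝ → ℝ²) : dC1 g₁ g₂ = dC1 g₂ g₁ := by
  simp only [dC1, dist_comm]

theorem dC1_self (g : ℝ → ℝ²) : dC1 g g = 0 := by
  simp [dC1]

theorem dC1_le {A B : ℝ} (hA : ∀ t, dist (g₁ t) (g₂ t) ≤ A)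
    (hB : ∀ t, dist (deriv g₁ t) (deriv g₂ t) ≤ B) : dC1 g₁ g₂ ≤ A + B :=
  add_le_add (Real.iSup_le hA (dist_nonneg.trans (hA 0)))
    (Real.iSup_le hB (dist_nonneg.trans (hB 0)))

theorem dist_le_dC1 (h₁ : InN g₁) (h₂ : InN g₂) (t : ℝ) : dist (g₁ t) (g₂ t) ≤ dC1 g₁ g₂ :=
  (le_ciSup (bddAbove_range_dist h₁.isBounded_range h₂.isBounded_range) t).trans
    (le_add_of_nonneg_right (Real.iSup_nonneg fun _ => dist_nonneg))

theorem dist_deriv_le_dC1 (h₁ : InN g₁) (h₂ : InN g₂) (t : ℝ) :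
    dist (deriv g₁ t) (deriv g₂ t) ≤ dC1 g₁ g₂ :=
  (le_ciSup (bddAbove_range_dist h₁.isBounded_range_deriv h₂.isBounded_range_deriv) t).trans
    (le_add_of_nonneg_left (Real.iSup_nonneg fun _ => dist_nonneg))

theorem dC1_triangle (h₁ : InN g₁) (h₂ : InN g₂) (h₃ : InN g₃) :
    dC1 g₁ g₃ ≤ dC1 g₁ g₂ + dC1 g₂ g₃ := by
  have hpos := ciSup_dist_le_add (bddAbove_range_dist h₁.isBounded_range h₂.isBounded_range)
    (bddAbove_range_dist h₂.isBounded_range h₃.isBounded_range)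
  have hvel := ciSup_dist_le_add
    (bddAbove_range_dist h₁.isBounded_range_deriv h₂.isBounded_range_deriv)
    (bddAbove_range_dist h₂.isBounded_range_deriv h₃.isBounded_range_deriv)
  simp only [dC1] at *
  linarith

theorem dC1_comp_mul_add (g₁ g₂ : ℝ → ℝ²) {ε : ℝ} (hε : ε = 1 ∨ ε = -1) (c : ℝ) :
    dC1 (fun t => g₁ (ε * t + c)) (fun t => g₂ (ε * t + c)) = dC1 g₁ g₂ := by
  have hsurj : Surjective fun t : ℝ => ε * t + c := fun y =>
    ⟨ε * (y - c), by rcases hε with rfl | rfl <;> ring⟩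
  simp only [dC1, deriv_comp_mul_add, dist_smul₀, Real.norm_eq_abs, (abs_eq zero_le_one).mpr hε,
    one_mul]
  rw [hsurj.iSup_comp (fun s => dist (g₁ s) (g₂ s)),
    hsurj.iSup_comp (fun s => dist (deriv g₁ s) (deriv g₂ s))]

end dC1

section deltaDist

variable {γ₁ γ₂ γ₃ : ℝ → ℝ²}

theorem deltaDist_le {g₁ g₂ : ℝ → ℝ²} (h₁ : LoopRel g₁ γ₁) (h₂ : LoopRel g₂ γ₂) :
    deltaDist γ₁ γ₂ ≤ dC1 g₁ g₂ :=
  csInf_le ⟨0, by rintro _ ⟨g₁, g₂, -, -, rfl⟩; exact dC1_nonneg _ _⟩ ⟨g₁, g₂, h₁, h₂, rfl⟩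

theorem deltaDist_nonneg (γ₁ γ₂ : ℝ → ℝ²) : 0 ≤ deltaDist γ₁ γ₂ :=
  le_csInf ⟨dC1 γ₁ γ₂, γ₁, γ₂, .refl _, .refl _, rfl⟩
    (by rintro _ ⟨g₁, g₂, -, -, rfl⟩; exact dC1_nonneg _ _)

theorem deltaDist_self (γ : ℝ → ℝ²) : deltaDist γ γ = 0 :=
  le_antisymm ((deltaDist_le (.refl γ) (.refl γ)).trans_eq (dC1_self γ)) (deltaDist_nonneg γ γ)

theorem deltaDist_comm (γ₁ γ₂ : ℝ → ℝ²) : deltaDist γ₁ γ₂ = deltaDist γ₂ γ₁ := by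
  simp only [deltaDist]
  congr 1
  ext r
  constructor <;> rintro ⟨g₁, g₂, h₁, h₂, rfl⟩ <;> exact ⟨g₂, g₁, h₂, h₁, dC1_comm _ _⟩

theorem deltaDist_congr_left {γ₁' : ℝ → ℝ²} (h : LoopRel γ₁ γ₁') :
    deltaDist γ₁ γ₂ = deltaDist γ₁' γ₂ := by
  simp only [deltaDist]
  congr 1
  ext r
  constructor <;> rintro ⟨g₁, g₂, h₁, h₂, rfl⟩
  exacts [⟨g₁, g₂, h₁.trans h, h₂, rfl⟩, ⟨g₁, g₂, h₁.trans h.symm, h₂, rfl⟩]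

theorem exists_dC1_lt_of_deltaDist_lt {g : ℝ → ℝ²} (hg : LoopRel g γ₁) {r : ℝ}
    (h : deltaDist γ₁ γ₂ < r) : ∃ g', LoopRel g' γ₂ ∧ dC1 g g' < r := by
  obtain ⟨_, ⟨g₁, g₂, h₁, h₂, rfl⟩, hlt⟩ :=
    exists_lt_of_csInf_lt (by exact ⟨dC1 γ₁ γ₂, γ₁, γ₂, .refl _, .refl _, rfl⟩) h
  obtain ⟨ε, c, hε, hgg₁⟩ := hg.trans h₁.symm
  refine ⟨fun t => g₂ (ε * t + c), (LoopRel.comp_mul_add g₂ hε c).trans h₂, ?_⟩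
  rwa [(funext hgg₁ : g = _), dC1_comp_mul_add g₁ g₂ hε c]

theorem deltaDist_triangle (h₁ : InN γ₁) (h₂ : InN γ₂) (h₃ : InN γ₃) :
    deltaDist γ₁ γ₃ ≤ deltaDist γ₁ γ₂ + deltaDist γ₂ γ₃ := by
  refine le_of_forall_pos_lt_add fun e he => ?_
  obtain ⟨g₁, hg₁, hd₁⟩ := exists_dC1_lt_of_deltaDist_lt (.refl γ₂)
    ((deltaDist_comm γ₂ γ₁).trans_lt (lt_add_of_pos_right (deltaDist γ₁ γ₂) (half_pos he)))
  obtain ⟨g₃, hg₃, hd₃⟩ := exists_dC1_lt_of_deltaDist_lt (.refl γ₂)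
    (lt_add_of_pos_right (deltaDist γ₂ γ₃) (half_pos he))
  calc deltaDist γ₁ γ₃ ≤ dC1 g₁ g₃ := deltaDist_le hg₁ hg₃
    _ ≤ dC1 g₁ γ₂ + dC1 γ₂ g₃ := dC1_triangle (h₁.of_loopRel hg₁) h₂ (h₃.of_loopRel hg₃)
    _ < deltaDist γ₁ γ₂ + deltaDist γ₂ γ₃ + e := by rw [dC1_comm] at hd₁; linarith

theorem loopRel_of_deltaDist_eq_zero (h₁ : InN γ₁) (h₂ : InN γ₂) (h : deltaDist γ₁ γ₂ = 0) :
    LoopRel γ₁ γ₂ := by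
  set K : Set (ℝ × ℝ) := ({1, -1} : Set ℝ) ×ˢ Icc 0 1
  have hK : IsCompact K := (toFinite _).isCompact.prod isCompact_Icc
  set S : ℕ → Set (ℝ × ℝ) := fun n =>
    K ∩ {p | ∀ s, dist (γ₁ s) (γ₂ (p.1 * s + p.2)) ≤ 1 / (n + 1)}
  have hS_closed (n : ℕ) : IsClosed (S n) :=
    hK.isClosed.inter <| by
      simp only [ofPred_forall]
      exact isClosed_iInter fun s =>
        isClosed_le (by have := h₂.1.1.continuous; fun_prop) continuous_const
  have hS_nonempty (n : ℕ) : (S n).Nonempty := by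
    obtain ⟨g, hg, hlt⟩ := exists_dC1_lt_of_deltaDist_lt (.refl γ₁)
      (h.trans_lt (Nat.one_div_pos_of_nat (n := n)))
    obtain ⟨ε, c, hε, hc, hgγ₂⟩ := hg.exists_mem_Ico h₂.1.2
    refine ⟨(ε, c), ⟨hε, Ico_subset_Icc_self hc⟩, fun s => ?_⟩
    rw [← hgγ₂]
    exact (dist_le_dC1 h₁ (h₂.of_loopRel hg) s).trans hlt.le
  have hS_anti (n : ℕ) : S (n + 1) ⊆ S n := fun p hp =>
    ⟨hp.1, fun s => (hp.2 s).trans (by gcongr; linarith)⟩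
  obtain ⟨⟨ε, c⟩, hp⟩ := IsCompact.nonempty_iInter_of_sequence_nonempty_isCompact_isClosed S
    hS_anti hS_nonempty (hK.of_isClosed_subset (hS_closed 0) inter_subset_left) hS_closed
  rw [mem_iInter] at hp
  refine ⟨ε, c, (hp 0).1.1, fun s => eq_of_forall_dist_le fun e he => ?_⟩
  obtain ⟨n, hn⟩ := exists_nat_one_div_lt he
  exact ((hp n).2 s).trans hn.le

end deltaDist

theorem exists_tendstoUniformly_of_dist_succ_le_geometric {α E : Type*} [PseudoMetricSpace E]
    [CompleteSpace E] {f : ℕ → α → E} {C r : ℝ} (hr₀ : 0 ≤ r) (hr : r < 1)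
    (hf : ∀ k t, dist (f k t) (f (k + 1) t) ≤ C * r ^ k) :
    ∃ F : α → E, TendstoUniformly f F atTop ∧ ∀ k t, dist (f k t) (F t) ≤ C * r ^ k / (1 - r) := by
  choose F hF using fun t =>
    cauchySeq_tendsto_of_complete (cauchySeq_of_le_geometric r C hr (hf · t))
  have hbound k t : dist (f k t) (F t) ≤ C * r ^ k / (1 - r) :=
    dist_le_of_le_geometric_of_tendsto r C hr (hf · t) (hF t) k
  refine ⟨F, Metric.tendstoUniformly_iff.mpr fun e he => ?_, hbound⟩
  have hlim : Tendsto (fun k => C * r ^ k / (1 - r)) atTop (𝓝 0) := by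
    simpa using ((tendsto_pow_atTop_nhds_zero_of_lt_one hr₀ hr).const_mul C).div_const (1 - r)
  filter_upwards [hlim.eventually (gt_mem_nhds he)] with k hk t
  exact (dist_comm (F t) _).trans_le (hbound k t) |>.trans_lt hk

theorem InN.of_tendstoUniformly {h : ℕ → ℝ → ℝ²} {γ φ : ℝ → ℝ²} (hN : ∀ k, InN (h k))
    (hγ : TendstoUniformly h γ atTop) (hφ : TendstoUniformly (fun k => deriv (h k)) φ atTop) :
    InN γ ∧ deriv γ = φ := by
  have hder (t : ℝ) : HasDerivAt γ (φ t) t :=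
    hasDerivAt_of_tendstoUniformly hφ
      (Eventually.of_forall fun k t => ((hN k).differentiable t).hasDerivAt) hγ.tendsto_at t
  have hderiv : deriv γ = φ := funext fun t => (hder t).deriv
  have hφ_cont : Continuous φ :=
    hφ.continuous (Frequently.of_forall fun k => (hN k).continuous_deriv)
  refine ⟨⟨⟨contDiff_one_iff_deriv.mpr ⟨fun t => (hder t).differentiableAt, hderiv ▸ hφ_cont⟩,
    fun t => ?_⟩, fun t => ?_⟩, hderiv⟩
  · refine tendsto_nhds_unique ?_ (hγ.tendsto_at t)
    simpa only [(hN _).1.2 t] using hγ.tendsto_at (t + 1)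
  · refine hderiv ▸ tendsto_nhds_unique (hφ.tendsto_at t).norm ?_
    simpa only [(hN _).2 t] using tendsto_const_nhds

theorem exists_inN_dC1_le_of_dC1_succ_le {h : ℕ → ℝ → ℝ²} (hN : ∀ k, InN (h k))
    (hd : ∀ k, dC1 (h k) (h (k + 1)) ≤ (1 / 2) ^ k) :
    ∃ γ, InN γ ∧ ∀ k, dC1 (h k) γ ≤ 4 * (1 / 2) ^ k := by
  obtain ⟨γ, hγ, hγ_le⟩ := exists_tendstoUniformly_of_dist_succ_le_geometric (C := 1)
    (by norm_num) (by norm_num) fun k t =>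
      (dist_le_dC1 (hN k) (hN (k + 1)) t).trans ((hd k).trans_eq (one_mul _).symm)
  obtain ⟨φ, hφ, hφ_le⟩ := exists_tendstoUniformly_of_dist_succ_le_geometric (C := 1)
    (by norm_num) (by norm_num) fun k t =>
      (dist_deriv_le_dC1 (hN k) (hN (k + 1)) t).trans ((hd k).trans_eq (one_mul _).symm)
  obtain ⟨hγN, hderiv⟩ := InN.of_tendstoUniformly hN hγ hφ
  refine ⟨γ, hγN, fun k => (dC1_le (hγ_le k) (hderiv ▸ hφ_le k)).trans_eq ?_⟩
  ring

theorem exists_loopRel_chain_dC1_lt {β : ℕ → ℝ → ℝ²} {r : ℕ → ℝ}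
    (hβ : ∀ k, deltaDist (β k) (β (k + 1)) < r k) :
    ∃ h : ℕ → ℝ → ℝ², (∀ k, LoopRel (h k) (β k)) ∧ ∀ k, dC1 (h k) (h (k + 1)) < r k := by
  choose! F hF using fun k (g : ℝ → ℝ²) (hg : LoopRel g (β k)) =>
    exists_dC1_lt_of_deltaDist_lt hg (hβ k)
  let h : ℕ → ℝ → ℝ² := fun k => Nat.rec (motive := fun _ => ℝ → ℝ²) (β 0) F k
  have hrel (k : ℕ) : LoopRel (h k) (β k) := by
    induction k with
    | zero => exact .refl _
    | succ k ih => exact (hF k _ ih).1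
  exact ⟨h, hrel, fun k => (hF k _ (hrel k)).2⟩

theorem exists_tendsto_deltaDist_of_cauchy {γs : ℕ → ℝ → ℝ²} (hN : ∀ k, InN (γs k))
    (hC : ∀ ε : ℝ, 0 < ε → ∃ K : ℕ, ∀ p ≥ K, ∀ q ≥ K, deltaDist (γs p) (γs q) < ε) :
    ∃ γ, InN γ ∧ Tendsto (fun k => deltaDist (γs k) γ) atTop (𝓝 0) := by
  obtain ⟨φ, hφ_mono, hφ⟩ := extraction_forall_of_eventually'
    (P := fun k m => ∀ p ≥ m, ∀ q ≥ m, deltaDist (γs p) (γs q) < (1 / 2) ^ k)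
    fun k => (hC _ (by positivity)).imp fun K hK m hm p hp q hq =>
      hK p (hm.trans hp) q (hm.trans hq)
  obtain ⟨h, hrel, hd⟩ := exists_loopRel_chain_dC1_lt (β := γs ∘ φ)
    fun k => hφ k _ le_rfl _ (hφ_mono.monotone k.le_succ)
  obtain ⟨γ, hγ, hdγ⟩ := exists_inN_dC1_le_of_dC1_succ_le
    (fun k => (hN _).of_loopRel (hrel k)) fun k => (hd k).le
  refine ⟨γ, hγ, Metric.tendsto_atTop.mpr fun e he => ?_⟩
  obtain ⟨j, hj⟩ := exists_pow_lt_of_lt_one (div_pos he (by norm_num : (0 : ℝ) < 5))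
    (by norm_num : (1 / 2 : ℝ) < 1)
  refine ⟨φ j, fun k hk => ?_⟩
  rw [Real.dist_eq, sub_zero, abs_of_nonneg (deltaDist_nonneg _ _)]
  calc deltaDist (γs k) γ ≤ deltaDist (γs k) (γs (φ j)) + deltaDist (γs (φ j)) γ :=
        deltaDist_triangle (hN k) (hN (φ j)) hγ
    _ < (1 / 2) ^ j + 4 * (1 / 2) ^ j :=
        add_lt_add_of_lt_of_le (hφ j k hk (φ j) le_rfl)
          ((deltaDist_le (hrel j) (.refl γ)).trans (hdγ j))
    _ < e := by linarith

/-- `δ` is a distance on `L = N/∼` (it is well defined on classes, nonnegative,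
symmetric, satisfies the triangle inequality, and `δ(ℓ₁, ℓ₂) = 0` implies `ℓ₁ = ℓ₂`),
and the metric space `(L, δ)` is complete. -/
theorem stmt4 :
    (∀ γ₁ γ₁' γ₂ : ℝ → EuclideanSpace ℝ (Fin 2), InN γ₁ → InN γ₂ → LoopRel γ₁ γ₁' →
      deltaDist γ₁ γ₂ = deltaDist γ₁' γ₂) ∧
    (∀ γ₁ γ₂ : ℝ → EuclideanSpace ℝ (Fin 2), InN γ₁ → InN γ₂ →
      0 ≤ deltaDist γ₁ γ₂) ∧
    (∀ γ : ℝ → EuclideanSpace ℝ (Fin 2), InN γ → deltaDist γ γ = 0) ∧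
    (∀ γ₁ γ₂ : ℝ → EuclideanSpace ℝ (Fin 2), InN γ₁ → InN γ₂ →
      deltaDist γ₁ γ₂ = deltaDist γ₂ γ₁) ∧
    (∀ γ₁ γ₂ γ₃ : ℝ → EuclideanSpace ℝ (Fin 2), InN γ₁ → InN γ₂ → InN γ₃ →
      deltaDist γ₁ γ₃ ≤ deltaDist γ₁ γ₂ + deltaDist γ₂ γ₃) ∧
    (∀ γ₁ γ₂ : ℝ → EuclideanSpace ℝ (Fin 2), InN γ₁ → InN γ₂ →
      deltaDist γ₁ γ₂ = 0 → LoopRel γ₁ γ₂) ∧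
    (∀ γs : ℕ → ℝ → EuclideanSpace ℝ (Fin 2),
      (∀ k, InN (γs k)) →
      (∀ ε : ℝ, 0 < ε → ∃ K : ℕ, ∀ p ≥ K, ∀ q ≥ K, deltaDist (γs p) (γs q) < ε) →
      ∃ γ : ℝ → EuclideanSpace ℝ (Fin 2), InN γ ∧
        Tendsto (fun k => deltaDist (γs k) γ) atTop (𝓝 0)) := by
  exact ⟨fun _ _ _ _ _ h => deltaDist_congr_left h,
    fun γ₁ γ₂ _ _ => deltaDist_nonneg γ₁ γ₂,
    fun γ _ => deltaDist_self γ,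
    fun γ₁ γ₂ _ _ => deltaDist_comm γ₁ γ₂,
    fun _ _ _ h₁ h₂ h₃ => deltaDist_triangle h₁ h₂ h₃,
    fun _ _ h₁ h₂ h => loopRel_of_deltaDist_eq_zero h₁ h₂ h,
    fun _ hN hC => exists_tendsto_deltaDist_of_cauchy hN hC⟩
end

section
/- Let ℓ₂ : ℝⁿ → ℝ be a C² function and let x₀ ∈ ℝⁿ be a nondegenerate critical point of ℓ₂, i.e. Dℓ₂(x₀) = 0 and the second derivative D²ℓ₂(x₀) is an invertible bilinear form. Then for every sufficiently small r > 0 there exists ε > 0 such that every C¹ function ℓ : ℝⁿ → ℝ satisfying sup_{x ∈ closedBall(x₀, r)} ‖Dℓ(x) − Dℓ₂(x)‖ < ε has at least one critical point in the open ball of radius r around x₀ (a point x with Dℓ(x) = 0). -/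
/-!
Near `x₀` the gradient of `ℓ₂` is a local homeomorphism (inverse function theorem, using
nondegeneracy) whose inverse `ψ` is defined on some ball `closedBall 0 ε`. If the gradient of `ℓ`
is `ε`-close to that of `ℓ₂`, then `y ↦ y - ∇ℓ (ψ y)` maps this ball into itself, and at a fixed
point `y` given by Brouwer's theorem, `∇ℓ` vanishes at `ψ y`. As `ℓ` is only `C¹`, the inverse
function theorem cannot be applied to `∇ℓ` itself.

Brouwer's theorem is proved by a smooth no-retraction argument. After smoothing, a fixed-point-free
self-map of the ball `B` gives a `C¹` retraction `P` of a neighbourhood of `B` onto the sphere.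
For `f t = id + t • (P - id)`, `∫_B det Df_t` is a polynomial in `t` of degree at most `dim E`.
For small `t`, `f t` maps `B` diffeomorphically onto itself, so the integral is `vol B`; but
`det DP = 0` since `P` takes values in the sphere, so the integral vanishes at `t = 1`.
-/

open Metric MeasureTheory Set Filter Polynomial Topology

theorem LinearMap.exists_polynomial_eval_eq_det_one_add_smul {K V : Type*} [Field K]
    [AddCommGroup V] [Module K V] [FiniteDimensional K V] (f : V →ₗ[K] V) :
    ∃ p : K[X], p.natDegree ≤ Module.finrank K V ∧
      ∀ t, p.eval t = LinearMap.det (1 + t • f) := by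
  classical
  let b := Module.finBasis K V
  let M := LinearMap.toMatrix b b f
  refine ⟨((X : K[X]) • M.map C + (1 : Matrix _ _ K).map C).det, ?_, fun t => ?_⟩
  · simpa using natDegree_det_X_add_C_le M 1
  · rw [← LinearMap.det_toMatrix b, map_add, map_smul, LinearMap.toMatrix_one,
      ← coe_evalRingHom, RingHom.map_det, RingHom.mapMatrix_apply]
    congr 1
    ext i j
    by_cases h : i = j <;> simp [M, h] <;> ring

theorem setIntegral_eq_of_polynomial_in_parameter {X : Type*} [MeasurableSpace X]
    {μ : Measure X} {s : Set X} (hs : MeasurableSet s) {g : ℝ → X → ℝ} {N : ℕ}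
    (hpoly : ∀ x ∈ s, ∃ p : ℝ[X], p.natDegree ≤ N ∧ ∀ t, p.eval t = g t x)
    (hint : ∀ t, IntegrableOn (g t) s μ) {a b c : ℝ} (hab : a < b)
    (hconst : ∀ t ∈ Icc a b, ∫ x in s, g t x ∂μ = c) (t₀ : ℝ) : ∫ x in s, g t₀ x ∂μ = c := by
  classical
  obtain ⟨T, hTab, hTcard⟩ := (Icc_infinite hab).exists_subset_card_eq (N + 1)
  set w : ℝ → ℝ := fun t => (Lagrange.basis T id t).eval t₀
  -- the value at `t₀` of a polynomial of degree `≤ N` is determined by its values on `T`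
  have hinterp : ∀ x ∈ s, g t₀ x = ∑ t ∈ T, w t * g t x := by
    intro x hx
    obtain ⟨p, hpN, hp⟩ := hpoly x hx
    have hdeg : p.degree < T.card := by
      rw [hTcard]
      exact (degree_le_of_natDegree_le hpN).trans_lt (by exact_mod_cast N.lt_succ_self)
    rw [← hp, Lagrange.eq_interpolate (injOn_id _) hdeg, Lagrange.interpolate_apply,
      eval_finsetSum]
    simp only [eval_mul, eval_C, id, hp, w]
    exact Finset.sum_congr rfl fun t _ => mul_comm _ _
  have hw : ∑ t ∈ T, w t = 1 := by
    have hT : T.Nonempty := Finset.card_pos.mp (by omega)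
    simpa [w, eval_finsetSum] using congrArg (eval t₀) (Lagrange.sum_basis (injOn_id _) hT)
  calc ∫ x in s, g t₀ x ∂μ = ∫ x in s, ∑ t ∈ T, w t * g t x ∂μ :=
        setIntegral_congr_fun hs hinterp
    _ = ∑ t ∈ T, w t * c := by
        rw [integral_finsetSum _ fun t _ => (hint t).const_mul (w t)]
        exact Finset.sum_congr rfl fun t ht => by rw [integral_const_mul, hconst t (hTab ht)]
    _ = c := by rw [← Finset.sum_mul, hw, one_mul]

theorem isUnit_of_norm_sub_one_lt_one {R : Type*} [NormedRing R] [HasSummableGeomSeries R]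
    {x : R} (h : ‖x - 1‖ < 1) : IsUnit x := by
  have := (Units.oneSub (1 - x) (by rwa [norm_sub_rev])).isUnit
  rwa [Units.val_oneSub, sub_sub_cancel] at this

theorem ContinuousLinearMap.det_ne_zero_of_isUnit {R V : Type*} [CommRing R] [TopologicalSpace V]
    [AddCommGroup V] [Module R V] [ContinuousAdd V] [Nontrivial R] {A : V →L[R] V}
    (hA : IsUnit A) : A.det ≠ 0 :=
  (LinearMap.isUnit_det _ (hA.map ContinuousLinearMap.toLinearMapRingHom)).ne_zero

theorem ContinuousLinearMap.det_pos_of_norm_sub_one_lt_one {V : Type*} [NormedAddCommGroup V]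
    [NormedSpace ℝ V] [FiniteDimensional ℝ V] {A : V →L[ℝ] V} (hA : ‖A - 1‖ < 1) :
    0 < A.det := by
  set g : ℝ → ℝ := fun s => (1 + s • (A - 1)).det
  have hg : ∀ s ∈ Icc (0 : ℝ) 1, g s ≠ 0 := fun s hs =>
    ContinuousLinearMap.det_ne_zero_of_isUnit <| isUnit_of_norm_sub_one_lt_one <| by
      rw [add_sub_cancel_left, norm_smul, Real.norm_of_nonneg hs.1]
      exact (mul_le_of_le_one_left (norm_nonneg _) hs.2).trans_lt hA
  have hcont : Continuous g := ContinuousLinearMap.continuous_det.comp (by fun_prop)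
  have hg0 : g 0 = 1 := by simp [g, ContinuousLinearMap.det]
  have hg1 : g 1 = A.det := by simp [g]
  by_contra! hneg
  obtain ⟨s, hs, hs0⟩ := intermediate_value_Icc' zero_le_one hcont.continuousOn
    (⟨hg1 ▸ hneg, hg0 ▸ zero_le_one⟩ : (0 : ℝ) ∈ Icc (g 1) (g 0))
  exact hg s hs hs0

theorem isOpen_image_of_hasStrictFDerivAt_equiv {𝕜 E F : Type*} [NontriviallyNormedField 𝕜]
    [NormedAddCommGroup E] [NormedSpace 𝕜 E] [CompleteSpace E] [NormedAddCommGroup F]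
    [NormedSpace 𝕜 F] {f : E → F} {s : Set E} (hs : IsOpen s)
    (hf : ∀ x ∈ s, ∃ e : E ≃L[𝕜] F, HasStrictFDerivAt f (e : E →L[𝕜] F) x) : IsOpen (f '' s) := by
  refine isOpen_iff_mem_nhds.mpr ?_
  rintro _ ⟨x, hx, rfl⟩
  obtain ⟨e, he⟩ := hf x hx
  rw [← he.map_nhds_eq_of_equiv]
  exact image_mem_map (hs.mem_nhds hx)

theorem image_closedBall_eq_closedBall {E : Type*} [NormedAddCommGroup E] [NormedSpace ℝ E]
    [ProperSpace E] {f : E → E} {c : E} {R : ℝ} (hR : 0 < R) (hf : ContinuousOn f (closedBall c R))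
    (hmaps : MapsTo f (closedBall c R) (closedBall c R)) (hsphere : ∀ x ∈ sphere c R, f x = x)
    (hopen : IsOpen (f '' ball c R)) : f '' closedBall c R = closedBall c R := by
  have hclosed : IsClosed (f '' closedBall c R) :=
    ((isCompact_closedBall c R).image_of_continuousOn hf).isClosed
  have hball : ball c R ⊆ f '' ball c R := by
    refine (convex_ball c R).isPreconnected.subset_of_closure_inter_subset hopen ?_ ?_
    · rw [← closure_inter_open_nonempty_iff hopen, closure_ball c hR.ne']
      exact ⟨f c, hmaps (mem_closedBall_self hR.le), mem_image_of_mem f (mem_ball_self hR)⟩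
    · rintro _ ⟨hy, hyball⟩
      obtain ⟨x, hx, rfl⟩ := closure_minimal (image_mono ball_subset_closedBall) hclosed hy
      -- points of the sphere are fixed, hence not mapped into the open ball
      have hxball : x ∈ ball c R := by
        refine lt_of_le_of_ne (mem_closedBall.mp hx) fun hxR => ?_
        rw [hsphere x (mem_sphere.mpr hxR), mem_ball, hxR] at hyball
        exact lt_irrefl R hyball
      exact mem_image_of_mem f hxball
  refine (image_subset_iff.mpr hmaps).antisymm ?_
  calc closedBall c R = closure (ball c R) := (closure_ball c hR.ne').symm
    _ ⊆ f '' closedBall c R :=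
      closure_minimal (hball.trans (image_mono ball_subset_closedBall)) hclosed

theorem setIntegral_det_eq_measureReal_closedBall {E : Type*} [NormedAddCommGroup E]
    [NormedSpace ℝ E] [FiniteDimensional ℝ E] [MeasurableSpace E] [BorelSpace E] (μ : Measure E)
    [μ.IsAddHaarMeasure] {f : E → E} {f' : E → E →L[ℝ] E} {a : E} {R c : ℝ} (hR : 0 < R)
    (hf : ∀ x ∈ closedBall a R, HasStrictFDerivAt f (f' x) x) (hc : c < 1)
    (hf' : ∀ x ∈ closedBall a R, ‖f' x - 1‖ ≤ c)
    (hmaps : MapsTo f (closedBall a R) (closedBall a R))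
    (hsphere : ∀ x ∈ sphere a R, f x = x) :
    ∫ x in closedBall a R, (f' x).det ∂μ = μ.real (closedBall a R) := by
  have hunit : ∀ x ∈ closedBall a R, IsUnit (f' x) := fun x hx =>
    isUnit_of_norm_sub_one_lt_one ((hf' x hx).trans_lt hc)
  -- `f - id` is a `c`-contraction on the ball
  have hinj : InjOn f (closedBall a R) := by
    intro x hx y hy hxy
    have h := (convex_closedBall a R).norm_image_sub_le_of_norm_hasFDerivWithin_le'
      (fun z hz => (hf z hz).hasFDerivAt.hasFDerivWithinAt) hf' hx hy
    rw [hxy, sub_self, zero_sub, norm_neg, one_apply_eq_self] at h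
    have hyx : ‖y - x‖ = 0 := by nlinarith [norm_nonneg (y - x)]
    exact (sub_eq_zero.mp (norm_eq_zero.mp hyx)).symm
  have himage : f '' closedBall a R = closedBall a R := by
    refine image_closedBall_eq_closedBall hR
      (fun x hx => (hf x hx).continuousAt.continuousWithinAt) hmaps hsphere
      (isOpen_image_of_hasStrictFDerivAt_equiv (𝕜 := ℝ) isOpen_ball fun x hx => ?_)
    exact ⟨ContinuousLinearEquiv.unitsEquiv ℝ E (hunit x (ball_subset_closedBall hx)).unit, hf x
      (ball_subset_closedBall hx)⟩
  have hcov := integral_image_eq_integral_abs_det_fderiv_smul μ measurableSet_closedBall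
    (fun x hx => (hf x hx).hasFDerivAt.hasFDerivWithinAt) hinj (fun _ => (1 : ℝ))
  rw [himage, setIntegral_const, smul_eq_mul, mul_one] at hcov
  rw [hcov]
  refine setIntegral_congr_fun measurableSet_closedBall fun x hx => ?_
  rw [smul_eq_mul, mul_one, abs_of_pos
    (ContinuousLinearMap.det_pos_of_norm_sub_one_lt_one ((hf' x hx).trans_lt hc))]

theorem exists_pos_setIntegral_det_homotopy_eq_measureReal {E : Type*}
    [NormedAddCommGroup E] [NormedSpace ℝ E] [FiniteDimensional ℝ E] [MeasurableSpace E]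
    [BorelSpace E] (μ : Measure E) [μ.IsAddHaarMeasure] {P : E → E} {P' : E → E →L[ℝ] E}
    {a : E} {R : ℝ} (hR : 0 < R) (hP : ∀ x ∈ closedBall a R, HasStrictFDerivAt P (P' x) x)
    (hP' : ContinuousOn P' (closedBall a R)) (hmaps : MapsTo P (closedBall a R) (closedBall a R))
    (hsphere : ∀ x ∈ sphere a R, P x = x) :
    ∃ τ : ℝ, 0 < τ ∧ ∀ t ∈ Icc 0 τ,
      ∫ x in closedBall a R, (1 + t • (P' x - 1)).det ∂μ = μ.real (closedBall a R) := by
  obtain ⟨L, hL⟩ := (isCompact_closedBall a R).exists_bound_of_continuousOn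
    (hP'.sub (continuousOn_const (c := (1 : E →L[ℝ] E))))
  set τ : ℝ := (2 * max L 1)⁻¹
  have hτ1 : τ ≤ 1 := inv_le_one_of_one_le₀ (by linarith [le_max_right L 1])
  refine ⟨τ, by positivity, fun t ht => ?_⟩
  refine setIntegral_det_eq_measureReal_closedBall μ hR (f := fun y => y + t • (P y - y))
    (fun x hx => (hasStrictFDerivAt_id x).add
      (((hP x hx).sub (hasStrictFDerivAt_id x)).const_smul t))
    (c := 1 / 2) (by norm_num) (fun x hx => ?_) (fun y hy => ?_) (fun y hy => ?_)
  · rw [add_sub_cancel_left, norm_smul, Real.norm_of_nonneg ht.1]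
    calc t * ‖P' x - 1‖ ≤ τ * max L 1 :=
          mul_le_mul ht.2 ((hL x hx).trans (le_max_left L 1)) (norm_nonneg _) (by positivity)
      _ = 1 / 2 := by simp only [τ]; field_simp
  · exact (convex_closedBall a R).add_smul_sub_mem hy (hmaps hy) ⟨ht.1, ht.2.trans hτ1⟩
  · simp [hsphere y hy]

section SphereExitPoint

variable {E : Type*} [NormedAddCommGroup E] [InnerProductSpace ℝ E]

open RealInnerProductSpace

-- The ray from `a` through `y` leaves the ball at `a + s • u`, where
-- `s = √(⟪a, u⟫² + R² - ‖a‖²) - ⟪a, u⟫` is the nonnegative root of `‖a + s • u‖ = R`.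
noncomputable def sphereExitPoint (R : ℝ) (a y : E) : E :=
  let u := ‖y - a‖⁻¹ • (y - a)
  a + (√(⟪a, u⟫ ^ 2 + R ^ 2 - ‖a‖ ^ 2) - ⟪a, u⟫) • u

theorem norm_add_smul_sq_of_norm_eq_one {u : E} (hu : ‖u‖ = 1) (a : E) (s : ℝ) :
    ‖a + s • u‖ ^ 2 = ‖a‖ ^ 2 + 2 * s * ⟪a, u⟫ + s ^ 2 := by
  rw [norm_add_sq_real, real_inner_smul_right, norm_smul, Real.norm_eq_abs, hu, mul_one, sq_abs]
  ring

theorem norm_sphereExitPoint {R : ℝ} {a y : E} (ha : ‖a‖ ≤ R) (hay : a ≠ y) :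
    ‖sphereExitPoint R a y‖ = R := by
  have hu : ‖‖y - a‖⁻¹ • (y - a)‖ = 1 := norm_smul_inv_norm (𝕜 := ℝ) (sub_ne_zero.mpr hay.symm)
  set b := ⟪a, ‖y - a‖⁻¹ • (y - a)⟫
  have hD : 0 ≤ b ^ 2 + R ^ 2 - ‖a‖ ^ 2 := by nlinarith [norm_nonneg a, sq_nonneg b]
  have hsq := norm_add_smul_sq_of_norm_eq_one hu a (√(b ^ 2 + R ^ 2 - ‖a‖ ^ 2) - b)
  rw [← pow_left_inj₀ (norm_nonneg _) ((norm_nonneg a).trans ha) two_ne_zero]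
  simp only [sphereExitPoint]
  rw [hsq]
  nlinarith [Real.sq_sqrt hD]

theorem sphereExitPoint_eq_self {R : ℝ} {a y : E} (ha : ‖a‖ < R) (hy : ‖y‖ = R) :
    sphereExitPoint R a y = y := by
  have hay : y - a ≠ 0 := sub_ne_zero.mpr fun h => by rw [h] at hy; linarith
  set d := ‖y - a‖
  set u := d⁻¹ • (y - a)
  set b := ⟪a, u⟫
  have hd : 0 < d := norm_pos_iff.mpr hay
  have hy' : y = a + d • u := by simp [u, smul_smul, hd.ne']
  have hquad : (d + b) ^ 2 = b ^ 2 + R ^ 2 - ‖a‖ ^ 2 := by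
    have hu : ‖u‖ = 1 := norm_smul_inv_norm hay
    have := norm_add_smul_sq_of_norm_eq_one hu a d
    rw [← hy', hy] at this
    nlinarith
  have hdb : 0 ≤ d + b := by nlinarith [norm_nonneg a]
  have hs : √(b ^ 2 + R ^ 2 - ‖a‖ ^ 2) - b = d := by
    rw [← hquad, Real.sqrt_sq hdb, add_sub_cancel_right]
  simp only [sphereExitPoint]
  rw [hs, ← hy']

theorem ContDiffAt.sphereExitPoint {F : Type*} [NormedAddCommGroup F] [NormedSpace ℝ F]
    {n : WithTop ℕ∞} {f g : F → E} {z : F} {R : ℝ} (hf : ContDiffAt ℝ n f z)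
    (hg : ContDiffAt ℝ n g z) (hfR : ‖f z‖ < R) (hfg : f z ≠ g z) :
    ContDiffAt ℝ n (fun w => sphereExitPoint R (f w) (g w)) z := by
  have hne : g z - f z ≠ 0 := sub_ne_zero.mpr hfg.symm
  have hu : ContDiffAt ℝ n (fun w => ‖g w - f w‖⁻¹ • (g w - f w)) z :=
    (((hg.sub hf).norm ℝ hne).inv (norm_ne_zero_iff.mpr hne)).smul (hg.sub hf)
  have hb := hf.inner ℝ hu
  have hD : ⟪f z, ‖g z - f z‖⁻¹ • (g z - f z)⟫ ^ 2 + R ^ 2 - ‖f z‖ ^ 2 ≠ 0 := by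
    nlinarith [norm_nonneg (f z), sq_nonneg ⟪f z, ‖g z - f z‖⁻¹ • (g z - f z)⟫]
  exact hf.add ((((Real.contDiffAt_sqrt hD).comp z (((hb.pow 2).add contDiffAt_const).sub
    (hf.norm_sq ℝ))).sub hb).smul hu)

end SphereExitPoint

section Brouwer

variable {E : Type*} [NormedAddCommGroup E] [InnerProductSpace ℝ E] [FiniteDimensional ℝ E]

theorem det_fderiv_eq_zero_of_eventually_norm_eq {P : E → E} {x : E} {R : ℝ} (hR : R ≠ 0)
    (hP : DifferentiableAt ℝ P x) (hnorm : ∀ᶠ y in 𝓝 x, ‖P y‖ = R) :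
    (fderiv ℝ P x).det = 0 := by
  have hzero : 2 • (innerSL ℝ (P x)).comp (fderiv ℝ P x) = 0 := by
    have hconst : (‖P ·‖ ^ 2) =ᶠ[𝓝 x] fun _ => R ^ 2 := hnorm.mono fun y hy => by simp only [hy]
    rw [← hP.hasFDerivAt.norm_sq.fderiv, hconst.fderiv_eq, fderiv_const_apply]
  by_contra hdet
  obtain ⟨v, hv⟩ := ((Module.End.isUnit_iff _).mp
    ((LinearMap.isUnit_iff_isUnit_det _).mpr (isUnit_iff_ne_zero.mpr hdet))).2 (P x)
  have hPx : P x = 0 := by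
    have := congrArg (· v) hzero
    simp only [smul_apply, ContinuousLinearMap.comp_apply, innerSL_apply_apply, zero_apply,
      smul_eq_zero, OfNat.ofNat_ne_zero, false_or] at this
    rw [show fderiv ℝ P x v = P x from hv] at this
    exact inner_self_eq_zero.mp this
  exact hR (by rw [← hnorm.self_of_nhds, hPx, norm_zero])

theorem false_of_contDiffOn_retraction_sphere {R : ℝ} (hR : 0 < R) {U : Set E} (hU : IsOpen U)
    (hBU : closedBall 0 R ⊆ U) {P : E → E} (hP : ContDiffOn ℝ 1 P U)
    (hPU : MapsTo P U (sphere 0 R)) (hPid : ∀ y ∈ sphere (0 : E) R, P y = y) : False := by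
  borelize E
  let μ : Measure E := Measure.addHaar
  have hPd : ∀ x ∈ U, HasStrictFDerivAt P (fderiv ℝ P x) x := fun x hx =>
    (hP.contDiffAt (hU.mem_nhds hx)).hasStrictFDerivAt one_ne_zero
  have hP' : ContinuousOn (fderiv ℝ P) (closedBall 0 R) :=
    (hP.continuousOn_fderiv_of_isOpen hU le_rfl).mono hBU
  obtain ⟨τ, hτ, hvol⟩ := exists_pos_setIntegral_det_homotopy_eq_measureReal μ hR
    (fun x hx => hPd x (hBU hx)) hP' (fun y hy => sphere_subset_closedBall (hPU (hBU hy))) hPid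
  have hpoly : ∀ x ∈ closedBall (0 : E) R, ∃ p : ℝ[X], p.natDegree ≤ Module.finrank ℝ E ∧
      ∀ t, p.eval t = (1 + t • (fderiv ℝ P x - 1)).det := fun x _ =>
    LinearMap.exists_polynomial_eval_eq_det_one_add_smul (fderiv ℝ P x - 1 : E →L[ℝ] E).toLinearMap
  have hint : ∀ t : ℝ, IntegrableOn (fun x => (1 + t • (fderiv ℝ P x - 1)).det)
      (closedBall 0 R) μ := fun t =>
    (ContinuousLinearMap.continuous_det.comp_continuousOn (continuousOn_const.add
      ((hP'.sub continuousOn_const).const_smul t))).integrableOn_compact (isCompact_closedBall 0 R)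
  have hdet1 : ∀ x ∈ closedBall (0 : E) R, (1 + (1 : ℝ) • (fderiv ℝ P x - 1)).det = 0 :=
    fun x hx => by
      rw [one_smul, add_sub_cancel]
      exact det_fderiv_eq_zero_of_eventually_norm_eq hR.ne' (hPd x (hBU hx)).differentiableAt
        (eventually_of_mem (hU.mem_nhds (hBU hx)) fun y hy => mem_sphere_zero_iff_norm.mp (hPU hy))
  have h1 := setIntegral_eq_of_polynomial_in_parameter measurableSet_closedBall hpoly hint hτ hvol 1
  rw [setIntegral_congr_fun measurableSet_closedBall hdet1, integral_zero, measureReal_def] at h1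
  exact (ENNReal.toReal_pos (measure_closedBall_pos μ 0 hR).ne' measure_closedBall_lt_top.ne).ne h1

theorem exists_fixedPoint_of_contDiff_of_mapsTo_ball {R : ℝ} (hR : 0 < R) {S : E → E}
    (hS : ContDiff ℝ 1 S) (hmaps : MapsTo S (closedBall 0 R) (ball 0 R)) :
    ∃ y ∈ closedBall 0 R, S y = y := by
  by_contra! hfix
  let U : Set E := {y | S y ≠ y} ∩ S ⁻¹' ball 0 R
  have hU : IsOpen U := (isOpen_ne_fun hS.continuous continuous_id).inter
    (isOpen_ball.preimage hS.continuous)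
  have hBU : closedBall 0 R ⊆ U := fun y hy => ⟨hfix y hy, hmaps hy⟩
  have hSU : ∀ y ∈ U, ‖S y‖ < R := fun y hy => mem_ball_zero_iff.mp hy.2
  refine false_of_contDiffOn_retraction_sphere hR hU hBU
    (P := fun y => sphereExitPoint R (S y) y) (fun y hy => ?_) (fun y hy => ?_) (fun y hy => ?_)
  · exact (hS.contDiffAt.sphereExitPoint contDiffAt_id (hSU y hy) hy.1).contDiffWithinAt
  · exact mem_sphere_zero_iff_norm.mpr (norm_sphereExitPoint (hSU y hy).le hy.1)
  · exact sphereExitPoint_eq_self (hSU y (hBU (sphere_subset_closedBall hy)))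
      (mem_sphere_zero_iff_norm.mp hy)

theorem exists_norm_sub_lt_of_norm_le {R : ℝ} (hR : 0 < R) {T : E → E} (hT : Continuous T)
    (hTR : ∀ y, ‖T y‖ ≤ R) {δ : ℝ} (hδ : 0 < δ) :
    ∃ y ∈ closedBall 0 R, ‖T y - y‖ < 2 * δ := by
  obtain ⟨g, hg, hgT, -⟩ := hT.exists_contDiff_approx 1 continuous_const fun _ => hδ
  have hgR : ∀ y, ‖g y‖ < R + δ := fun y => by
    linarith [norm_le_norm_add_norm_sub' (g y) (T y), hTR y, dist_eq_norm (g y) (T y) ▸ hgT y]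
  set c := R / (R + δ)
  -- scaling by `c` pushes `g` strictly inside the ball, at the cost of another `δ`
  have hc : 0 < c := by positivity
  have hmaps : MapsTo (fun y => c • g y) (closedBall 0 R) (ball 0 R) := fun y _ => by
    rw [mem_ball_zero_iff, norm_smul, Real.norm_of_nonneg hc.le]
    calc c * ‖g y‖ < c * (R + δ) := mul_lt_mul_of_pos_left (hgR y) hc
      _ = R := div_mul_cancel₀ R (by positivity)
  obtain ⟨y, hy, hfix⟩ := exists_fixedPoint_of_contDiff_of_mapsTo_ball hR
    (contDiff_const.smul hg) hmaps
  replace hfix : c • g y = y := hfix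
  refine ⟨y, hy, ?_⟩
  have hgc : ‖g y - c • g y‖ < δ := by
    have h1c : 1 - c = δ / (R + δ) := by simp only [c]; field_simp; ring
    rw [← one_smul ℝ (g y), smul_smul, mul_one, ← sub_smul, norm_smul, h1c,
      Real.norm_of_nonneg (by positivity)]
    calc δ / (R + δ) * ‖g y‖ < δ / (R + δ) * (R + δ) :=
          mul_lt_mul_of_pos_left (hgR y) (by positivity)
      _ = δ := div_mul_cancel₀ δ (by positivity)
  calc ‖T y - y‖ ≤ ‖T y - g y‖ + ‖g y - c • g y‖ := by
        nth_rw 2 [← hfix]; exact norm_sub_le_norm_sub_add_norm_sub _ _ _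
    _ < δ + δ := add_lt_add (by rw [← dist_eq_norm, dist_comm]; exact hgT y) hgc
    _ = 2 * δ := by ring

theorem exists_fixedPoint_of_mapsTo_closedBall {R : ℝ} (hR : 0 ≤ R) {S : E → E}
    (hS : ContinuousOn S (closedBall 0 R)) (hmaps : MapsTo S (closedBall 0 R) (closedBall 0 R)) :
    ∃ y ∈ closedBall 0 R, S y = y := by
  rcases hR.eq_or_lt with rfl | hR
  · exact ⟨0, mem_closedBall_self le_rfl, by simpa using hmaps (mem_closedBall_self le_rfl)⟩
  have hmax : ∀ y : E, 0 < max R ‖y‖ := fun y => hR.trans_le (le_max_left _ _)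
  -- the radial retraction `r` onto the ball extends `S` to `S ∘ r` on all of `E`
  let r : E → E := fun y => (R / max R ‖y‖) • y
  have hr : ∀ y, r y ∈ closedBall 0 R := fun y => by
    rw [mem_closedBall_zero_iff, norm_smul, Real.norm_of_nonneg (div_pos hR (hmax y)).le,
      div_mul_eq_mul_div, div_le_iff₀ (hmax y)]
    exact mul_le_mul_of_nonneg_left (le_max_right _ _) hR.le
  have hr_id : ∀ y ∈ closedBall (0 : E) R, r y = y := fun y hy => by
    simp [r, max_eq_left (mem_closedBall_zero_iff.mp hy), hR.ne']
  have hT : Continuous (S ∘ r) := hS.comp_continuous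
    ((continuous_const.div (continuous_const.max continuous_norm) fun y => (hmax y).ne').smul
      continuous_id) hr
  obtain ⟨y₀, hy₀, hmin⟩ := (isCompact_closedBall (0 : E) R).exists_isMinOn
    (nonempty_closedBall.mpr hR.le) (hT.sub continuous_id).norm.continuousOn
  refine ⟨y₀, hy₀, ?_⟩
  by_contra hne
  have hpos : 0 < ‖S (r y₀) - y₀‖ := norm_pos_iff.mpr (sub_ne_zero.mpr (by rwa [hr_id y₀ hy₀]))
  obtain ⟨y, hy, hlt⟩ := exists_norm_sub_lt_of_norm_le hR hT
    (fun y => mem_closedBall_zero_iff.mp (hmaps (hr y))) (half_pos hpos)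
  have hle : ‖S (r y₀) - y₀‖ ≤ ‖S (r y) - y‖ := hmin hy
  change ‖S (r y) - y‖ < 2 * (‖S (r y₀) - y₀‖ / 2) at hlt
  linarith

theorem HasStrictFDerivAt.exists_zero_of_norm_sub_le {F : E → E} {e : E ≃L[ℝ] E} {x₀ : E}
    (hF : HasStrictFDerivAt F (e : E →L[ℝ] E) x₀) (hF0 : F x₀ = 0) {r : ℝ} (hr : 0 < r) :
    ∃ ε > 0, ∀ G : E → E, ContinuousOn G (ball x₀ r) →
      (∀ x ∈ ball x₀ r, ‖G x - F x‖ ≤ ε) → ∃ x ∈ ball x₀ r, G x = 0 := by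
  let φ := hF.toOpenPartialHomeomorph F
  have hx₀ : x₀ ∈ φ.source := hF.mem_toOpenPartialHomeomorph_source
  have h0 : 0 ∈ φ.target := hF0 ▸ φ.map_source hx₀
  have hφ0 : φ.symm 0 = x₀ := hF0 ▸ φ.left_inv hx₀
  have hnhds : φ.target ∩ φ.symm ⁻¹' ball x₀ r ∈ 𝓝 0 :=
    inter_mem (φ.open_target.mem_nhds h0)
      ((φ.continuousAt_symm h0).preimage_mem_nhds (hφ0 ▸ ball_mem_nhds x₀ hr))
  obtain ⟨ε, hε, hεsub⟩ := nhds_basis_closedBall.mem_iff.mp hnhds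
  refine ⟨ε, hε, fun G hG hGF => ?_⟩
  -- `y = F (φ.symm y)` on the target, so zeros of `G ∘ φ.symm` are fixed points of `S`
  obtain ⟨y, hy, hfix⟩ := exists_fixedPoint_of_mapsTo_closedBall hε.le
    (S := fun y => y - G (φ.symm y))
    (continuousOn_id.sub (hG.comp (φ.continuousOn_symm.mono fun y hy => (hεsub hy).1)
      fun y hy => (hεsub hy).2))
    (fun y hy => by
      rw [mem_closedBall_zero_iff, norm_sub_rev]
      nth_rw 2 [← φ.right_inv (hεsub hy).1]
      exact hGF _ (hεsub hy).2)
  exact ⟨φ.symm y, (hεsub hy).2, by simpa using hfix⟩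

theorem exists_fderiv_eq_zero_of_norm_fderiv_sub_le {ℓ₂ : E → ℝ} (hℓ₂ : ContDiff ℝ 2 ℓ₂)
    {x₀ : E} (hcrit : fderiv ℝ ℓ₂ x₀ = 0)
    (hnd : Function.Bijective (fderiv ℝ (fderiv ℝ ℓ₂) x₀)) {r : ℝ} (hr : 0 < r) :
    ∃ ε > 0, ∀ ℓ : E → ℝ, ContDiff ℝ 1 ℓ →
      (∀ x ∈ ball x₀ r, ‖fderiv ℝ ℓ x - fderiv ℝ ℓ₂ x‖ ≤ ε) →
        ∃ x ∈ ball x₀ r, fderiv ℝ ℓ x = 0 := by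
  -- pass from derivatives to gradients through the Riesz isometry `J`
  let J : StrongDual ℝ E ≃L[ℝ] E := (InnerProductSpace.toDual ℝ E).symm.toContinuousLinearEquiv
  let H := (LinearEquiv.ofBijective _ hnd).toContinuousLinearEquiv
  have hF : HasStrictFDerivAt (J ∘ fderiv ℝ ℓ₂) ((H.trans J : E ≃L[ℝ] E) : E →L[ℝ] E) x₀ :=
    (J : StrongDual ℝ E →L[ℝ] E).hasStrictFDerivAt.comp x₀
      ((hℓ₂.fderiv_right (m := 1) (by norm_num)).contDiffAt.hasStrictFDerivAt one_ne_zero)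
  obtain ⟨ε, hε, h⟩ := hF.exists_zero_of_norm_sub_le (by simp [hcrit]) hr
  refine ⟨ε, hε, fun ℓ hℓ hclose => ?_⟩
  obtain ⟨x, hx, hx0⟩ := h (J ∘ fderiv ℝ ℓ)
    (J.continuous.comp (hℓ.continuous_fderiv one_ne_zero)).continuousOn fun x hx => by
      rw [Function.comp_apply, Function.comp_apply, ← map_sub]
      exact (LinearIsometryEquiv.norm_map _ _).trans_le (hclose x hx)
  exact ⟨x, hx, J.map_eq_zero_iff.mp hx0⟩

end Brouwer

/-- Persistence of a nondegenerate critical point under `C¹`-small perturbations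
(Lemma 6 of the paper): if `x₀` is a nondegenerate critical point of a `C²` function
`ℓ₂ : ℝⁿ → ℝ`, then for every sufficiently small `r > 0` there is `ε > 0` such that any
`C¹` function whose derivative is `ε`-close to that of `ℓ₂` on the closed ball of radius
`r` has a critical point in the open ball of radius `r` around `x₀`. -/
theorem stmt7 {n : ℕ} (ℓ₂ : EuclideanSpace ℝ (Fin n) → ℝ)
    (hℓ₂ : ContDiff ℝ 2 ℓ₂)
    (x₀ : EuclideanSpace ℝ (Fin n))
    (hcrit : fderiv ℝ ℓ₂ x₀ = 0)
    (hnd : Function.Bijective ⇑(fderiv ℝ (fderiv ℝ ℓ₂) x₀)) :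
    ∃ r₀ : ℝ, 0 < r₀ ∧ ∀ r : ℝ, 0 < r → r ≤ r₀ →
      ∃ ε : ℝ, 0 < ε ∧ ∀ ℓ : EuclideanSpace ℝ (Fin n) → ℝ,
        ContDiff ℝ 1 ℓ →
        (∀ x ∈ Metric.closedBall x₀ r, ‖fderiv ℝ ℓ x - fderiv ℝ ℓ₂ x‖ < ε) →
        ∃ x ∈ Metric.ball x₀ r, fderiv ℝ ℓ x = 0 := by
  refine ⟨1, one_pos, fun r hr _ => ?_⟩
  obtain ⟨ε, hε, h⟩ := exists_fderiv_eq_zero_of_norm_fderiv_sub_le hℓ₂ hcrit hnd hr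
  exact ⟨ε, hε, fun ℓ hℓ hclose => h ℓ hℓ fun x hx => (hclose x (ball_subset_closedBall hx)).le⟩
end

section
/- Let ℓ₂ : ℝⁿ → ℝ be a C² function and let x₀ ∈ ℝⁿ be a nondegenerate critical point of ℓ₂ (Dℓ₂(x₀) = 0 and D²ℓ₂(x₀) invertible). Then for every sufficiently small r > 0 there exists ε > 0 such that every C² function ℓ : ℝⁿ → ℝ satisfying sup_{x ∈ closedBall(x₀, r)} ( ‖Dℓ(x) − Dℓ₂(x)‖ + ‖D²ℓ(x) − D²ℓ₂(x)‖ ) < ε has exactly one critical point in the open ball of radius r around x₀, and this critical point is nondegenerate. -/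
/-!
Write `A = D²ℓ₂(x₀)` and apply the quantitative inverse function theorem to `f = Dℓ`: if
`‖Df - A‖ ≤ c < ‖A⁻¹‖⁻¹` on a closed ball, then `f` is injective there and its image contains the
ball of radius `(‖A⁻¹‖⁻¹ - c) s` around `f x₀`, which contains `0` once `f x₀ = Dℓ(x₀) - Dℓ₂(x₀)`
is small. Continuity of `D²ℓ₂` at `x₀` provides such a `c` on small balls, and since the invertible
operators form an open set, `D²ℓ` is still invertible at the zero of `Dℓ` found this way.
-/

open Function Metric Topology
open scoped NNReal

section

variable {E F : Type*} [NormedAddCommGroup E] [NormedSpace ℝ E] [NormedAddCommGroup F]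
  [NormedSpace ℝ F]

theorem Convex.approximatesLinearOn_of_norm_fderiv_sub_le {f : E → F} {A : E →L[ℝ] F}
    {s : Set E} {c : ℝ≥0} (hs : Convex ℝ s) (hf : ∀ x ∈ s, DifferentiableAt ℝ f x)
    (hfA : ∀ x ∈ s, ‖fderiv ℝ f x - A‖ ≤ c) : ApproximatesLinearOn f A s c :=
  fun _ hx _ hy => norm_image_sub_le_of_norm_fderiv_le' hf hfA hs hy hx

theorem ContinuousLinearEquiv.eventually_bijective [CompleteSpace E] (A : E ≃L[ℝ] F) :
    ∀ᶠ B : E →L[ℝ] F in 𝓝 (A : E →L[ℝ] F), Bijective B :=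
  Filter.mem_of_superset A.nhds fun _ ⟨e, he⟩ => he ▸ e.bijective

variable [CompleteSpace E]

theorem existsUnique_zero_of_norm_fderiv_sub_le {f : E → F} {A : E ≃L[ℝ] F} {c : ℝ≥0}
    (hc : c < ‖(A.symm : F →L[ℝ] E)‖₊⁻¹) {x₀ : E} {r s : ℝ} (hs : 0 ≤ s) (hsr : s < r)
    (hf : ∀ x ∈ closedBall x₀ r, DifferentiableAt ℝ f x)
    (hfA : ∀ x ∈ closedBall x₀ r, ‖fderiv ℝ f x - A‖ ≤ c)
    (hfx₀ : ‖f x₀‖ ≤ ((‖(A.symm : F →L[ℝ] E)‖₊ : ℝ)⁻¹ - c) * s) :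
    ∃ x ∈ ball x₀ r, f x = 0 ∧ ∀ y ∈ ball x₀ r, f y = 0 → y = x := by
  have happrox := (convex_closedBall x₀ r).approximatesLinearOn_of_norm_fderiv_sub_le hf hfA
  have hsub : closedBall x₀ s ⊆ closedBall x₀ r := closedBall_subset_closedBall hsr.le
  obtain ⟨x, hx, hfx⟩ := (happrox.mono_set hsub).surjOn_closedBall_of_nonlinearRightInverse
    A.toNonlinearRightInverse hs subset_rfl (show (0 : F) ∈ closedBall (f x₀) _ by
      rwa [mem_closedBall, dist_zero_left])
  refine ⟨x, closedBall_subset_ball hsr hx, hfx, fun y hy hfy => ?_⟩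
  exact happrox.injOn (Or.inr hc) (ball_subset_closedBall hy) (hsub hx) (hfy.trans hfx.symm)

variable [CompleteSpace F]

theorem exists_unique_nondegenerate_zero_of_near {g : E → F} {x₀ : E}
    (hg : ContinuousAt (fderiv ℝ g) x₀) (hgx₀ : g x₀ = 0) (hnd : Bijective (fderiv ℝ g x₀)) :
    ∃ r₀ : ℝ, 0 < r₀ ∧ ∀ r : ℝ, 0 < r → r ≤ r₀ → ∃ ε : ℝ, 0 < ε ∧ ∀ f : E → F,
      (∀ x ∈ closedBall x₀ r, DifferentiableAt ℝ f x) →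
      (∀ x ∈ closedBall x₀ r, ‖f x - g x‖ + ‖fderiv ℝ f x - fderiv ℝ g x‖ < ε) →
      ∃ x, (x ∈ ball x₀ r ∧ f x = 0 ∧ Bijective (fderiv ℝ f x)) ∧
        ∀ y ∈ ball x₀ r, f y = 0 → y = x := by
  set A := ContinuousLinearEquiv.ofBijective (fderiv ℝ g x₀)
    (LinearMap.ker_eq_bot.2 hnd.1) (LinearMap.range_eq_top.2 hnd.2)
  have hA : (A : E →L[ℝ] F) = fderiv ℝ g x₀ := ContinuousLinearEquiv.coe_ofBijective _ _ _
  -- `‖A⁻¹‖₊⁻¹ = 0` when `E` is trivial, so that case cannot go through the quantitative bounds.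
  rcases subsingleton_or_nontrivial E with hE | hE
  · have : Subsingleton F := (Equiv.subsingleton_congr A.toEquiv).1 hE
    refine ⟨1, one_pos, fun r hr _ => ⟨1, one_pos, fun f _ _ => ⟨x₀, ⟨mem_ball_self hr,
      Subsingleton.elim _ _, ?_⟩, fun y _ _ => Subsingleton.elim y x₀⟩⟩⟩
    exact ⟨fun a b _ => Subsingleton.elim a b, fun y => ⟨0, Subsingleton.elim _ _⟩⟩
  set N := ‖(A.symm : F →L[ℝ] E)‖₊
  obtain ⟨ρ, hρ, hbij⟩ := Metric.eventually_nhds_iff.1 A.eventually_bijective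
  obtain ⟨c, hc0, hc⟩ :=
    exists_between (lt_min (inv_pos.2 A.nnnorm_symm_pos) (Real.toNNReal_pos.2 hρ))
  have hcN : c < N⁻¹ := hc.trans_le (min_le_left _ _)
  have hcρ : (c : ℝ) < ρ := Real.lt_toNNReal_iff_coe_lt.1 (hc.trans_le (min_le_right _ _))
  obtain ⟨δ, hδ, hgA⟩ := Metric.continuousAt_iff.1 hg (c / 2 : ℝ) (by positivity)
  refine ⟨δ / 2, by positivity, fun r hr hrδ => ?_⟩
  have hNc : (0 : ℝ) < (N : ℝ)⁻¹ - c := by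
    rw [sub_pos, ← NNReal.coe_inv]; exact_mod_cast hcN
  refine ⟨min (c / 2) (((N : ℝ)⁻¹ - c) * (r / 2)), by positivity, fun f hf hclose => ?_⟩
  have hfA : ∀ x ∈ closedBall x₀ r, ‖fderiv ℝ f x - A‖ ≤ c := by
    intro x hx
    have hgx := hgA (x := x) (by linarith [mem_closedBall.1 hx])
    rw [dist_eq_norm, ← hA] at hgx
    linarith [hclose x hx, norm_sub_le_norm_sub_add_norm_sub (fderiv ℝ f x) (fderiv ℝ g x) A,
      min_le_left (c / 2 : ℝ) (((N : ℝ)⁻¹ - c) * (r / 2)), norm_nonneg (f x - g x)]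
  have hfx₀ : ‖f x₀‖ ≤ ((N : ℝ)⁻¹ - c) * (r / 2) := by
    have h := hclose x₀ (mem_closedBall_self hr.le)
    rw [hgx₀, sub_zero] at h
    linarith [min_le_right (c / 2 : ℝ) (((N : ℝ)⁻¹ - c) * (r / 2)),
      norm_nonneg (fderiv ℝ f x₀ - fderiv ℝ g x₀)]
  obtain ⟨x, hx, hfx, huniq⟩ :=
    existsUnique_zero_of_norm_fderiv_sub_le hcN (half_pos hr).le (half_lt_self hr) hf hfA hfx₀
  have hfxA : dist (fderiv ℝ f x) A < ρ :=
    (dist_eq_norm _ _).trans_lt ((hfA x (ball_subset_closedBall hx)).trans_lt hcρ)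
  exact ⟨x, ⟨hx, hfx, hbij hfxA⟩, huniq⟩

end

/-- `C²` version of the persistence of a nondegenerate critical point: if `x₀` is a
nondegenerate critical point of a `C²` function `ℓ₂ : ℝⁿ → ℝ`, then for every
sufficiently small `r > 0` there is `ε > 0` such that any `C²` function that is
`ε`-close to `ℓ₂` in the `C²` sense on the closed ball of radius `r` has exactly one
critical point in the open ball of radius `r` around `x₀`, and this critical point is
nondegenerate. -/
theorem stmt8 {n : ℕ} (ℓ₂ : EuclideanSpace ℝ (Fin n) → ℝ)
    (hℓ₂ : ContDiff ℝ 2 ℓ₂)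
    (x₀ : EuclideanSpace ℝ (Fin n))
    (hcrit : fderiv ℝ ℓ₂ x₀ = 0)
    (hnd : Function.Bijective ⇑(fderiv ℝ (fderiv ℝ ℓ₂) x₀)) :
    ∃ r₀ : ℝ, 0 < r₀ ∧ ∀ r : ℝ, 0 < r → r ≤ r₀ →
      ∃ ε : ℝ, 0 < ε ∧ ∀ ℓ : EuclideanSpace ℝ (Fin n) → ℝ,
        ContDiff ℝ 2 ℓ →
        (∀ x ∈ Metric.closedBall x₀ r,
          ‖fderiv ℝ ℓ x - fderiv ℝ ℓ₂ x‖
            + ‖fderiv ℝ (fderiv ℝ ℓ) x - fderiv ℝ (fderiv ℝ ℓ₂) x‖ < ε) →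
        ∃ x : EuclideanSpace ℝ (Fin n),
          (x ∈ Metric.ball x₀ r ∧ fderiv ℝ ℓ x = 0 ∧
            Function.Bijective ⇑(fderiv ℝ (fderiv ℝ ℓ) x)) ∧
          ∀ y ∈ Metric.ball x₀ r, fderiv ℝ ℓ y = 0 → y = x := by
  have hg : ContinuousAt (fderiv ℝ (fderiv ℝ ℓ₂)) x₀ :=
    ((hℓ₂.fderiv_right (m := 1) le_rfl).continuous_fderiv one_ne_zero).continuousAt
  obtain ⟨r₀, hr₀, hpersist⟩ := exists_unique_nondegenerate_zero_of_near hg hcrit hnd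
  refine ⟨r₀, hr₀, fun r hr hrr₀ => ?_⟩
  obtain ⟨ε, hε, hzero⟩ := hpersist r hr hrr₀
  exact ⟨ε, hε, fun ℓ hℓ => hzero (fderiv ℝ ℓ) fun x _ =>
    ((hℓ.fderiv_right (m := 1) le_rfl).differentiable one_ne_zero).differentiableAt⟩
end
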